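/- Let 0 < α ≤ 1, β > 0, α + β > 1, and fix δ > 0. Let w(x) = 1/(x^α(z + x^β)) for a fixed z with |arg z| < π − δ and |z| ≥ 1. Then for every integer k ≥ 1 and all x ∈ [k, k+1], |w(x) − w(k)| ≤ C / (k^{α+1} (|z| + k^β)) for a constant C depending only on α, β, δ. -/

import Mathlib

open Complex Real

/-!
The numerator of `1 / (x^α (z + x^β)) - 1 / (k^α (z + k^β))` is
`(x^α - k^α) z + (x^(α+β) - k^(α+β))`, which by the mean value theorem is
`O(k^(α-1) (‖z‖ + k^β))` for `x ∈ [k, 2k]`. In the sector `|arg z| ≤ π - δ` the law of cosines gives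
`‖z + t‖ ≥ sin (δ/2) (‖z‖ + t)` for `t ≥ 0`, so both denominators have modulus at least
`k^α sin (δ/2) (‖z‖ + k^β)`. Dividing yields the bound with
`C = (α 2^α + (α+β) 2^(α+β)) / sin² (δ/2)`.
-/

lemma rpow_sub_one_le_two_rpow_mul {p k t : ℝ} (hp : 0 ≤ p) (hk : 0 < k) (hkt : k ≤ t)
    (ht : t ≤ 2 * k) : t ^ (p - 1) ≤ 2 ^ p * k ^ (p - 1) := by
  rcases le_total p 1 with hp1 | hp1
  · calc t ^ (p - 1) ≤ k ^ (p - 1) := rpow_le_rpow_of_nonpos hk hkt (by linarith)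
      _ ≤ 2 ^ p * k ^ (p - 1) :=
        le_mul_of_one_le_left (by positivity) (one_le_rpow one_le_two hp)
  · calc t ^ (p - 1) ≤ (2 * k) ^ (p - 1) := rpow_le_rpow (by linarith) ht (by linarith)
      _ = 2 ^ (p - 1) * k ^ (p - 1) := mul_rpow zero_le_two hk.le
      _ ≤ 2 ^ p * k ^ (p - 1) := by
        gcongr
        exacts [one_le_two, by linarith]

lemma rpow_sub_rpow_le {p k x : ℝ} (hp : 0 ≤ p) (hk : 0 < k) (hkx : k ≤ x) (hx : x ≤ 2 * k) :
    x ^ p - k ^ p ≤ p * 2 ^ p * k ^ (p - 1) * (x - k) := by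
  refine (convex_Icc k (2 * k)).image_sub_le_mul_sub_of_deriv_le
    (continuous_rpow_const hp).continuousOn ?_ ?_ k ⟨le_rfl, by linarith⟩ x ⟨hkx, hx⟩ hkx
  · rw [interior_Icc]
    exact fun t ht ↦
      (hasDerivAt_rpow_const (Or.inl (hk.trans ht.1).ne')).differentiableAt.differentiableWithinAt
  · rw [interior_Icc]
    intro t ht
    rw [Real.deriv_rpow_const, mul_assoc]
    exact mul_le_mul_of_nonneg_left (rpow_sub_one_le_two_rpow_mul hp hk ht.1.le ht.2.le) hp

lemma neg_cos_mul_norm_le_re {δ : ℝ} {z : ℂ} (hδ : 0 ≤ δ) (hz : |z.arg| ≤ π - δ) :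
    -(Real.cos δ * ‖z‖) ≤ z.re := by
  have : Real.cos (π - δ) ≤ Real.cos |z.arg| :=
    cos_le_cos_of_nonneg_of_le_pi (abs_nonneg _) (by linarith) hz
  rw [Real.cos_pi_sub, Real.cos_abs] at this
  rw [← norm_mul_cos_arg]
  nlinarith [norm_nonneg z]

lemma sin_half_mul_le_norm_add_ofReal {δ t : ℝ} {z : ℂ} (hδ : 0 ≤ δ) (hz : |z.arg| ≤ π - δ)
    (ht : 0 ≤ t) : Real.sin (δ / 2) * (‖z‖ + t) ≤ ‖z + t‖ := by
  have hre := neg_cos_mul_norm_le_re hδ hz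
  have hsin : Real.sin (δ / 2) ^ 2 = (1 - Real.cos δ) / 2 := by
    rw [sin_sq_eq_half_sub, mul_div_cancel₀ δ two_ne_zero]; ring
  have hnorm : ‖z + t‖ ^ 2 = ‖z‖ ^ 2 + 2 * t * z.re + t ^ 2 := by
    rw [Complex.sq_norm, Complex.sq_norm, normSq_add]
    simp only [normSq_apply, ofReal_re, ofReal_im, mul_zero, add_zero, conj_ofReal, mul_re,
      sub_zero]
    ring
  -- ‖z + t‖² ≥ ‖z‖² - 2t‖z‖ cos δ + t² = sin²(δ/2) (‖z‖ + t)² + cos²(δ/2) (‖z‖ - t)²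
  refine le_of_sq_le_sq ?_ (norm_nonneg _)
  rw [mul_pow, hsin, hnorm]
  nlinarith [mul_nonneg ht (by linarith : 0 ≤ z.re + Real.cos δ * ‖z‖),
    mul_nonneg (by linarith [neg_one_le_cos δ] : 0 ≤ 1 + Real.cos δ) (sq_nonneg (‖z‖ - t))]

lemma norm_one_div_sub_one_div_le {𝕜 : Type*} [NormedField 𝕜] {a b : 𝕜} {D N : ℝ} (hD : 0 < D)
    (ha : D ≤ ‖a‖) (hb : D ≤ ‖b‖) (hab : ‖a - b‖ ≤ N) : ‖1 / a - 1 / b‖ ≤ N / D ^ 2 := by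
  have ha0 : a ≠ 0 := norm_pos_iff.mp (hD.trans_le ha)
  have hb0 : b ≠ 0 := norm_pos_iff.mp (hD.trans_le hb)
  rw [one_div, one_div, inv_sub_inv ha0 hb0, norm_div, norm_mul, norm_sub_rev, sq]
  exact div_le_div₀ ((norm_nonneg _).trans hab) hab (by positivity)
    (mul_le_mul ha hb hD.le (norm_nonneg _))

noncomputable def weightDenom (α β : ℝ) (z : ℂ) (x : ℝ) : ℂ :=
  ((x ^ α : ℝ) : ℂ) * (z + ((x ^ β : ℝ) : ℂ))

section weightDenom

variable {α β k x : ℝ} {z : ℂ}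

lemma norm_weightDenom_sub_le (hα : 0 ≤ α) (hβ : 0 ≤ β) (hk : 0 < k) (hkx : k ≤ x)
    (hx : x ≤ 2 * k) :
    ‖weightDenom α β z x - weightDenom α β z k‖ ≤
      (α * 2 ^ α + (α + β) * 2 ^ (α + β)) * k ^ (α - 1) * (‖z‖ + k ^ β) * (x - k) := by
  have hx0 : 0 < x := hk.trans_le hkx
  have hsplit : weightDenom α β z x - weightDenom α β z k =
      ((x ^ α - k ^ α : ℝ) : ℂ) * z + ((x ^ (α + β) - k ^ (α + β) : ℝ) : ℂ) := by
    simp only [weightDenom, rpow_add hx0, rpow_add hk]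
    push_cast
    ring
  have hpow : k ^ (α + β - 1) = k ^ (α - 1) * k ^ β := by
    rw [← rpow_add hk]; ring_nf
  have hαβ : 0 ≤ α + β := add_nonneg hα hβ
  have hA : 0 ≤ α * 2 ^ α * k ^ (α - 1) * (x - k) := by
    have := sub_nonneg.2 hkx; positivity
  have hB : 0 ≤ (α + β) * 2 ^ (α + β) * k ^ (α - 1) * (x - k) := by
    have := sub_nonneg.2 hkx; positivity
  calc ‖weightDenom α β z x - weightDenom α β z k‖
      ≤ (x ^ α - k ^ α) * ‖z‖ + (x ^ (α + β) - k ^ (α + β)) := by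
        rw [hsplit]
        refine (norm_add_le _ _).trans_eq ?_
        rw [norm_mul, norm_real, norm_real, norm_of_nonneg, norm_of_nonneg]
        all_goals exact sub_nonneg.2 (rpow_le_rpow hk.le hkx (by positivity))
    _ ≤ α * 2 ^ α * k ^ (α - 1) * (x - k) * ‖z‖
          + (α + β) * 2 ^ (α + β) * k ^ (α - 1) * (x - k) * k ^ β := by
        have h1 := rpow_sub_rpow_le hα hk hkx hx
        have h2 := rpow_sub_rpow_le hαβ hk hkx hx
        rw [hpow] at h2
        linarith [mul_le_mul_of_nonneg_right h1 (norm_nonneg z)]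
    _ ≤ _ := by
        nlinarith [mul_nonneg hA (rpow_nonneg hk.le β), mul_nonneg hB (norm_nonneg z)]

lemma rpow_mul_sin_half_mul_le_norm_weightDenom {δ : ℝ} (hα : 0 ≤ α) (hβ : 0 ≤ β) (hδ : 0 ≤ δ)
    (hz : |z.arg| ≤ π - δ) (hk : 0 ≤ k) (hkx : k ≤ x) :
    k ^ α * (Real.sin (δ / 2) * (‖z‖ + k ^ β)) ≤ ‖weightDenom α β z x‖ := by
  have hsin : 0 ≤ Real.sin (δ / 2) :=
    sin_nonneg_of_nonneg_of_le_pi (by linarith) (by linarith [abs_nonneg z.arg, pi_pos])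
  have hx : 0 ≤ x := hk.trans hkx
  rw [weightDenom, norm_mul, norm_real, norm_of_nonneg (by positivity)]
  calc k ^ α * (Real.sin (δ / 2) * (‖z‖ + k ^ β))
      ≤ x ^ α * (Real.sin (δ / 2) * (‖z‖ + x ^ β)) := by gcongr
    _ ≤ x ^ α * ‖z + ((x ^ β : ℝ) : ℂ)‖ := by
        gcongr
        exact sin_half_mul_le_norm_add_ofReal hδ hz (by positivity)

end weightDenom

theorem stmt18_general (α β δ : ℝ) (hα0 : 0 < α) (hβ : 0 < β)
    (hδ : 0 < δ) :
    ∃ C : ℝ, ∀ z : ℂ, |z.arg| < Real.pi - δ → 1 ≤ ‖z‖ →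
      ∀ k : ℕ, 1 ≤ k → ∀ x : ℝ, x ∈ Set.Icc (k : ℝ) ((k : ℝ) + 1) →
        ‖(1 / (((x ^ α : ℝ) : ℂ) * (z + ((x ^ β : ℝ) : ℂ)))
            - 1 / (((((k : ℝ)) ^ α : ℝ) : ℂ) * (z + ((((k : ℝ)) ^ β : ℝ) : ℂ))))‖
          ≤ C / ((k : ℝ) ^ (α + 1) * (‖z‖ + (k : ℝ) ^ β)) := by
  refine ⟨(α * 2 ^ α + (α + β) * 2 ^ (α + β)) / Real.sin (δ / 2) ^ 2, ?_⟩
  intro z hz _ k hk x ⟨hkx, hxk⟩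
  have hk1 : (1 : ℝ) ≤ k := Nat.one_le_cast.2 hk
  have hk0 : (0 : ℝ) < k := one_pos.trans_le hk1
  have hsin : 0 < Real.sin (δ / 2) :=
    sin_pos_of_pos_of_lt_pi (by linarith) (by linarith [abs_nonneg z.arg, pi_pos])
  have hD : 0 < (k : ℝ) ^ α * (Real.sin (δ / 2) * (‖z‖ + (k : ℝ) ^ β)) := by positivity
  have hbound := norm_one_div_sub_one_div_le hD
    (rpow_mul_sin_half_mul_le_norm_weightDenom hα0.le hβ.le hδ.le hz.le hk0.le hkx)
    (rpow_mul_sin_half_mul_le_norm_weightDenom hα0.le hβ.le hδ.le hz.le hk0.le le_rfl)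
    (norm_weightDenom_sub_le (z := z) hα0.le hβ.le hk0 hkx (by linarith))
  refine hbound.trans ?_
  have hpow : (k : ℝ) ^ (α - 1) * (k : ℝ) ^ (α + 1) = (k : ℝ) ^ α * (k : ℝ) ^ α := by
    rw [← rpow_add hk0, ← rpow_add hk0]; ring_nf
  calc _ ≤ (α * 2 ^ α + (α + β) * 2 ^ (α + β)) * (k : ℝ) ^ (α - 1) * (‖z‖ + (k : ℝ) ^ β) * 1
        / ((k : ℝ) ^ α * (Real.sin (δ / 2) * (‖z‖ + (k : ℝ) ^ β))) ^ 2 := by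
        gcongr
        linarith
    _ = _ := by
        field_simp
        linear_combination hpow

theorem stmt18 (α β δ : ℝ) (hα0 : 0 < α) (hα1 : α ≤ 1) (hβ : 0 < β) (hαβ : 1 < α + β)
    (hδ : 0 < δ) :
    ∃ C : ℝ, ∀ z : ℂ, |z.arg| < Real.pi - δ → 1 ≤ ‖z‖ →
      ∀ k : ℕ, 1 ≤ k → ∀ x : ℝ, x ∈ Set.Icc (k : ℝ) ((k : ℝ) + 1) →
        ‖(1 / (((x ^ α : ℝ) : ℂ) * (z + ((x ^ β : ℝ) : ℂ)))
            - 1 / (((((k : ℝ)) ^ α : ℝ) : ℂ) * (z + ((((k : ℝ)) ^ β : ℝ) : ℂ))))‖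
          ≤ C / ((k : ℝ) ^ (α + 1) * (‖z‖ + (k : ℝ) ^ β)) :=
  stmt18_general α β δ hα0 hβ hδ
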